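/- Let (X,d) be an unbounded metric space and let r̃ be a scaling sequence. Then the following are equivalent: (1) the labeling ρ⁰ : V(G_{X,r̃}) → ℝ⁺ is injective; (2) for every infinite subsequence r̃' of r̃, the induced homomorphism Em' : V(G_{X,r̃}) → V(G_{X,r̃'}) is injective (a monomorphism). -/

import Mathlib

open Filter Topology
open scoped Classical

/-- An unbounded metric space. -/
def UnboundedSpace (X : Type*) [MetricSpace X] : Prop :=
  ¬ Bornology.IsBounded (Set.univ : Set X)

/-- A scaling sequence: positive reals tending to infinity. -/
def ScalingSeq (r : ℕ → ℝ) : Prop :=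
  (∀ n, 0 < r n) ∧ Filter.Tendsto r Filter.atTop Filter.atTop

/-- Two sequences are mutually stable w.r.t. `r` if `d(x_n, y_n)/r_n` has a finite limit. -/
def MutuallyStable {X : Type*} [MetricSpace X] (r : ℕ → ℝ) (x y : ℕ → X) : Prop :=
  ∃ L : ℝ, Filter.Tendsto (fun n => dist (x n) (y n) / r n) Filter.atTop (nhds L)

/-- `Seq(X, r̃)`: sequences going to infinity such that `d(x_n, p)/r_n` has a finite limit. -/
def SeqInf {X : Type*} [MetricSpace X] (r : ℕ → ℝ) (p : X) : Set (ℕ → X) :=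
  {x | Filter.Tendsto (fun n => dist (x n) p) Filter.atTop Filter.atTop ∧
    ∃ L : ℝ, Filter.Tendsto (fun n => dist (x n) p / r n) Filter.atTop (nhds L)}

/-- The relation `x̃ ≡ ỹ`, i.e. `d(x_n, y_n)/r_n → 0`. -/
def EquivSeq {X : Type*} [MetricSpace X] (r : ℕ → ℝ) (x y : ℕ → X) : Prop :=
  Filter.Tendsto (fun n => dist (x n) (y n) / r n) Filter.atTop (nhds 0)

/-- The `≡`-equivalence class of `x` inside `Seq(X, r̃)`. -/
def classOf {X : Type*} [MetricSpace X] (r : ℕ → ℝ) (p : X) (x : ℕ → X) : Set (ℕ → X) :=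
  {y | y ∈ SeqInf r p ∧ EquivSeq r x y}

/-- The vertex set of the cluster graph `G_{X, r̃}`: all `≡`-classes of `Seq(X, r̃)`. -/
def VertexSet {X : Type*} [MetricSpace X] (r : ℕ → ℝ) (p : X) : Set (Set (ℕ → X)) :=
  {v | ∃ x ∈ SeqInf r p, v = classOf r p x}

/-- Adjacency in the cluster graph `G_{X, r̃}`: distinct classes whose representatives
are mutually stable. -/
def AdjacentCl {X : Type*} [MetricSpace X] (r : ℕ → ℝ) (p : X) (u v : Set (ℕ → X)) : Prop :=
  u ∈ VertexSet r p ∧ v ∈ VertexSet r p ∧ u ≠ v ∧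
    ∀ x ∈ u, ∀ y ∈ v, MutuallyStable r x y

/-- The weight `ρ_X` on the cluster graph: for an edge `{u,v}` it is the (unique) limit
`lim d(x_n, y_n)/r_n` for representatives. -/
noncomputable def rhoX {X : Type*} [MetricSpace X] (r : ℕ → ℝ) (u v : Set (ℕ → X)) : ℝ :=
  sSup {L : ℝ | ∃ x ∈ u, ∃ y ∈ v,
    Filter.Tendsto (fun n => dist (x n) (y n) / r n) Filter.atTop (nhds L)}

/-- The root `ν₀ = X̃⁰_{∞,r̃}`: sequences with `d(z_n,p) → ∞` and `d(z_n,p)/r_n → 0`. -/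
def rootClass {X : Type*} [MetricSpace X] (r : ℕ → ℝ) (p : X) : Set (ℕ → X) :=
  {z | Filter.Tendsto (fun n => dist (z n) p) Filter.atTop Filter.atTop ∧
    Filter.Tendsto (fun n => dist (z n) p / r n) Filter.atTop (nhds 0)}

/-- The labeling `ρ⁰` of vertices: `ρ⁰(v) = lim d(x_n,p)/r_n` for `x̃ ∈ v`. -/
noncomputable def rho0 {X : Type*} [MetricSpace X] (r : ℕ → ℝ) (p : X)
    (v : Set (ℕ → X)) : ℝ :=
  sSup {L : ℝ | ∃ x ∈ v, Filter.Tendsto (fun n => dist (x n) p / r n) Filter.atTop (nhds L)}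

/-- A self-stable family: a subset of `Seq(X, r̃)` any two of whose members are
mutually stable. -/
def SelfStable {X : Type*} [MetricSpace X] (r : ℕ → ℝ) (p : X) (F : Set (ℕ → X)) : Prop :=
  F ⊆ SeqInf r p ∧ ∀ x ∈ F, ∀ y ∈ F, MutuallyStable r x y

/-- A maximal self-stable set `X̃_{∞, r̃}`. -/
def MaxSelfStable {X : Type*} [MetricSpace X] (r : ℕ → ℝ) (p : X) (F : Set (ℕ → X)) : Prop :=
  SelfStable r p F ∧ ∀ F', SelfStable r p F' → F ⊆ F' → F = F'

/-- The pretangent space `Ω^X_{∞,r̃}` attached to a maximal self-stable set `F`: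
the set of `≡`-classes of members of `F`. -/
def PretangentCl {X : Type*} [MetricSpace X] (r : ℕ → ℝ) (F : Set (ℕ → X)) :
    Set (Set (ℕ → X)) :=
  {v | ∃ x ∈ F, v = {y | y ∈ F ∧ EquivSeq r x y}}

/-- A clique in the cluster graph `G_{X, r̃}`. -/
def IsCliqueCl {X : Type*} [MetricSpace X] (r : ℕ → ℝ) (p : X)
    (C : Set (Set (ℕ → X))) : Prop :=
  C ⊆ VertexSet r p ∧ ∀ u ∈ C, ∀ v ∈ C, u ≠ v → AdjacentCl r p u v
/-! Both directions compare limits of `d(x_n, p)/r_n`, which are equal for `≡`-equivalent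
sequences and are preserved by passing to subsequences. If `ρ⁰` is injective, two classes
whose images under `Em'` coincide have the same label, hence are equal. Conversely, if two
classes `[x̃], [ỹ]` have the same label, the sequence `z̃` interleaving `x̃` (at even indices)
and `ỹ` (at odd indices) lies in `Seq(X, r̃)`; `Em'` for the even (resp. odd) subsequence
identifies `[z̃]` with `[x̃]` (resp. `[ỹ]`), so injectivity of these two maps gives
`[x̃] = [z̃] = [ỹ]`. -/

section Interleave

variable {α : Type*}

def interleave (x y : ℕ → α) (n : ℕ) : α :=
  if Even n then x n else y n

@[simp]
theorem interleave_two_mul (x y : ℕ → α) (k : ℕ) : interleave x y (2 * k) = x (2 * k) := by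
  simp [interleave]

@[simp]
theorem interleave_two_mul_add_one (x y : ℕ → α) (k : ℕ) :
    interleave x y (2 * k + 1) = y (2 * k + 1) := by
  simp [interleave]

theorem interleave_map {β : Type*} (f : ℕ → α → β) (x y : ℕ → α) :
    (fun n => f n (interleave x y n)) =
      interleave (fun n => f n (x n)) (fun n => f n (y n)) := by
  ext n
  unfold interleave
  split_ifs <;> rfl

theorem Filter.Tendsto.interleave {l : Filter α} {x y : ℕ → α} (hx : Tendsto x atTop l)
    (hy : Tendsto y atTop l) : Tendsto (_root_.interleave x y) atTop l :=
  (hx.mono_left inf_le_left).if (hy.mono_left inf_le_left)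

end Interleave

section ClusterGraph

variable {X : Type*} [MetricSpace X] {r : ℕ → ℝ} {p : X}

theorem equivSeq_refl (r : ℕ → ℝ) (x : ℕ → X) : EquivSeq r x x := by
  simp [EquivSeq]

theorem EquivSeq.symm {x y : ℕ → X} (h : EquivSeq r x y) : EquivSeq r y x := by
  simpa [EquivSeq, dist_comm] using h

theorem EquivSeq.limit_eq {x y : ℕ → X} {L M : ℝ} (hxy : EquivSeq r x y)
    (hx : Tendsto (fun n => dist (x n) p / r n) atTop (𝓝 L))
    (hy : Tendsto (fun n => dist (y n) p / r n) atTop (𝓝 M)) : L = M := by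
  have hdiff : Tendsto (fun n => dist (x n) p / r n - dist (y n) p / r n) atTop (𝓝 0) := by
    refine squeeze_zero_norm (fun n => ?_) (tendsto_zero_iff_norm_tendsto_zero.1 hxy)
    rw [← sub_div, Real.norm_eq_abs, Real.norm_eq_abs, abs_div, abs_div,
      abs_of_nonneg dist_nonneg]
    gcongr
    exact abs_dist_sub_le _ _ _
  exact sub_eq_zero.1 (tendsto_nhds_unique (hx.sub hy) hdiff)

theorem comp_mem_seqInf {x : ℕ → X} (hx : x ∈ SeqInf r p) {φ : ℕ → ℕ}
    (hφ : Tendsto φ atTop atTop) : (fun k => x (φ k)) ∈ SeqInf (fun k => r (φ k)) p :=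
  ⟨hx.1.comp hφ, hx.2.imp fun _ hL => hL.comp hφ⟩

theorem mem_classOf_self {x : ℕ → X} (hx : x ∈ SeqInf r p) : x ∈ classOf r p x :=
  ⟨hx, equivSeq_refl r x⟩

theorem mem_seqInf_of_mem_vertex {u : Set (ℕ → X)} {x : ℕ → X} (hu : u ∈ VertexSet r p)
    (hx : x ∈ u) : x ∈ SeqInf r p := by
  obtain ⟨_, _, rfl⟩ := hu
  exact hx.1

theorem rho0_eq_of_mem {u : Set (ℕ → X)} {x : ℕ → X} {L : ℝ} (hu : u ∈ VertexSet r p)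
    (hx : x ∈ u) (hL : Tendsto (fun n => dist (x n) p / r n) atTop (𝓝 L)) :
    rho0 r p u = L := by
  obtain ⟨x₀, ⟨-, L₀, hL₀⟩, rfl⟩ := hu
  have limit_eq_L₀ : ∀ y ∈ classOf r p x₀, ∀ M : ℝ,
      Tendsto (fun n => dist (y n) p / r n) atTop (𝓝 M) → M = L₀ :=
    fun y hy M hM => (hy.2.limit_eq hL₀ hM).symm
  have limits : {M : ℝ | ∃ y ∈ classOf r p x₀,
      Tendsto (fun n => dist (y n) p / r n) atTop (𝓝 M)} = {L} := by
    refine Set.eq_singleton_iff_unique_mem.2 ⟨⟨x, hx, hL⟩, ?_⟩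
    rintro M ⟨y, hy, hM⟩
    exact (limit_eq_L₀ y hy M hM).trans (limit_eq_L₀ x hx L hL).symm
  rw [rho0, limits, csSup_singleton]

theorem interleave_mem_seqInf {x y : ℕ → X} {L : ℝ} (hx : x ∈ SeqInf r p) (hy : y ∈ SeqInf r p)
    (hxL : Tendsto (fun n => dist (x n) p / r n) atTop (𝓝 L))
    (hyL : Tendsto (fun n => dist (y n) p / r n) atTop (𝓝 L)) :
    interleave x y ∈ SeqInf r p := by
  refine ⟨?_, L, ?_⟩
  · rw [interleave_map (fun _ z => dist z p)]
    exact hx.1.interleave hy.1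
  · rw [interleave_map (fun n z => dist z p / r n)]
    exact hxL.interleave hyL

end ClusterGraph

theorem rho0_injective_iff_em_injective_general {X : Type*} [MetricSpace X]
    (p : X) (r : ℕ → ℝ) :
    Set.InjOn (rho0 r p) (VertexSet r p) ↔
      ∀ φ : ℕ → ℕ, StrictMono φ →
        ∀ u ∈ VertexSet r p, ∀ v ∈ VertexSet r p, ∀ x ∈ u, ∀ y ∈ v,
          classOf (fun k => r (φ k)) p (fun k => x (φ k)) =
            classOf (fun k => r (φ k)) p (fun k => y (φ k)) →
          u = v := by
  constructor
  · intro hinj φ hφ u hu v hv x hxu y hyv hEm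
    have hx := mem_seqInf_of_mem_vertex hu hxu
    obtain ⟨Lx, hLx⟩ := hx.2
    obtain ⟨Ly, hLy⟩ := (mem_seqInf_of_mem_vertex hv hyv).2
    have hxφ := mem_classOf_self (comp_mem_seqInf hx hφ.tendsto_atTop)
    rw [hEm] at hxφ
    have hL : Lx = Ly :=
      hxφ.2.symm.limit_eq (hLx.comp hφ.tendsto_atTop) (hLy.comp hφ.tendsto_atTop)
    exact hinj hu hv (by rw [rho0_eq_of_mem hu hxu hLx, rho0_eq_of_mem hv hyv hLy, hL])
  · rintro hEm _ ⟨x, hx, rfl⟩ _ ⟨y, hy, rfl⟩ hρ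
    obtain ⟨L, hxL⟩ := hx.2
    obtain ⟨M, hyM⟩ := hy.2
    have hyL : Tendsto (fun n => dist (y n) p / r n) atTop (𝓝 L) := by
      rwa [← rho0_eq_of_mem ⟨x, hx, rfl⟩ (mem_classOf_self hx) hxL, hρ,
        rho0_eq_of_mem ⟨y, hy, rfl⟩ (mem_classOf_self hy) hyM]
    have hz := interleave_mem_seqInf hx hy hxL hyL
    have even_eq : classOf r p (interleave x y) = classOf r p x :=
      hEm (2 * ·) (fun _ _ h => by dsimp only; omega) _ ⟨_, hz, rfl⟩ _ ⟨x, hx, rfl⟩ _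
        (mem_classOf_self hz) _ (mem_classOf_self hx) (by simp)
    have odd_eq : classOf r p (interleave x y) = classOf r p y :=
      hEm (2 * · + 1) (fun _ _ h => by dsimp only; omega) _ ⟨_, hz, rfl⟩ _ ⟨y, hy, rfl⟩ _
        (mem_classOf_self hz) _ (mem_classOf_self hy) (by simp)
    rw [← even_eq, odd_eq]

/-- Lemma l2.2.14. The labeling `ρ⁰` is injective on `V(G_{X,r̃})`
iff for every infinite subsequence `r̃' = r ∘ φ`, the induced homomorphism
`Em' : V(G_{X,r̃}) → V(G_{X,r̃'})` (sending the class of `x̃` to the class of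
`x̃ ∘ φ`) is injective. -/
theorem rho0_injective_iff_em_injective {X : Type*} [MetricSpace X]
    (hX : UnboundedSpace X) (p : X) (r : ℕ → ℝ) (hr : ScalingSeq r) :
    Set.InjOn (rho0 r p) (VertexSet r p) ↔
      ∀ φ : ℕ → ℕ, StrictMono φ →
        ∀ u ∈ VertexSet r p, ∀ v ∈ VertexSet r p, ∀ x ∈ u, ∀ y ∈ v,
          classOf (fun k => r (φ k)) p (fun k => x (φ k)) =
            classOf (fun k => r (φ k)) p (fun k => y (φ k)) →
          u = v :=
  rho0_injective_iff_em_injective_general p r
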